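/- Let K be a convex body in R^n, let u_1,...,u_m be unit vectors and c_1,...,c_m > 0 such that ‖x‖_K^p = Σ_{i=1}^m c_i |⟨x,u_i⟩|^p for all x (Lewis position of a section of ℓ_p^m) and Σ_i c_i u_i ⊗ u_i = Id. Then for p ≥ 2 and all x ∈ R^n: |x|² ≤ n^{1-2/p} ‖x‖_K², i.e. the circumradius a(K) satisfies a(K) ≤ n^{1/2 - 1/p}. -/
import Mathlib

open MeasureTheory
open scoped RealInnerProductSpace

/-- Lewis position of a section of `ℓ_p^m`: if `‖x‖_K^p = Σ cᵢ |⟨x,uᵢ⟩|^p` with unit vectors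
`uᵢ` and `Σ cᵢ uᵢ ⊗ uᵢ = Id`, then for `p ≥ 2`, `|x|² ≤ n^{1-2/p} ‖x‖_K²` for all `x`,
i.e. the circumradius satisfies `a(K) ≤ n^{1/2-1/p}`. -/
theorem lewis_position_circumradius {n m : ℕ}
    (K : Set (EuclideanSpace ℝ (Fin n))) (hKconv : Convex ℝ K) (hKcompact : IsCompact K)
    (hKsymm : K = -K) (hK0 : (0 : EuclideanSpace ℝ (Fin n)) ∈ interior K)
    (u : Fin m → EuclideanSpace ℝ (Fin n)) (c : Fin m → ℝ) (hc : ∀ i, 0 < c i)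
    (hu : ∀ i, ‖u i‖ = 1)
    (hiso : ∀ θ : EuclideanSpace ℝ (Fin n), ∑ i, c i * ⟪u i, θ⟫ ^ 2 = ‖θ‖ ^ 2)
    (p : ℝ) (hp : 2 ≤ p)
    (hnorm : ∀ x : EuclideanSpace ℝ (Fin n), gauge K x ^ p = ∑ i, c i * |⟪x, u i⟫| ^ p) :
    (∀ x : EuclideanSpace ℝ (Fin n), ‖x‖ ^ 2 ≤ (n : ℝ) ^ (1 - 2 / p) * gauge K x ^ 2) ∧
      K ⊆ Metric.closedBall 0 ((n : ℝ) ^ ((1 : ℝ) / 2 - 1 / p)) := by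
  have hp0 : 0 < p := lt_of_lt_of_le two_pos hp
  -- Σ c_i = n
  have hsum : ∑ i, c i = (n : ℝ) := by
    have h1 : ∀ i : Fin m, ∑ j : Fin n, (u i j) ^ 2 = 1 := by
      intro i
      have := EuclideanSpace.norm_eq (u i)
      rw [hu i] at this
      have h2 : Real.sqrt (∑ j, ‖u i j‖ ^ 2) = 1 := this.symm
      have := Real.sqrt_eq_one.mp h2
      simpa [Real.norm_eq_abs, sq_abs] using this
    calc ∑ i, c i = ∑ i, c i * ∑ j : Fin n, (u i j) ^ 2 := by
          simp [h1]
      _ = ∑ j : Fin n, ∑ i, c i * (u i j) ^ 2 := by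
          rw [Finset.sum_comm]; simp [Finset.mul_sum]
      _ = ∑ j : Fin n, (1 : ℝ) := by
          refine Finset.sum_congr rfl fun j _ => ?_
          have := hiso (EuclideanSpace.single j 1)
          simpa [EuclideanSpace.inner_single_right, EuclideanSpace.norm_single] using this
      _ = n := by simp
  -- main inequality
  have main : ∀ x : EuclideanSpace ℝ (Fin n), ‖x‖ ^ 2 ≤ (n : ℝ) ^ (1 - 2 / p) * gauge K x ^ 2 := by
    intro x
    have hq : (1 : ℝ) ≤ p / 2 := by linarith [hp]
    have H := Real.inner_le_weight_mul_Lp_of_nonneg Finset.univ hq c (fun i => ⟪x, u i⟫ ^ 2)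
      (fun i => (hc i).le) (fun i => sq_nonneg _)
    have hinv : (p / 2)⁻¹ = 2 / p := by rw [inv_div]
    have hexp : (1 : ℝ) - (p / 2)⁻¹ = 1 - 2 / p := by rw [hinv]
    rw [hinv, hsum] at H
    have hfp : ∀ i : Fin m, (⟪x, u i⟫ ^ 2) ^ (p / 2) = |⟪x, u i⟫| ^ p := by
      intro i
      rw [← sq_abs, ← Real.rpow_natCast |⟪x, u i⟫| 2, ← Real.rpow_mul (abs_nonneg _)]
      norm_num
      congr 1
      ring
    simp only [hfp] at H
    rw [← hnorm x] at H
    have hg0 : 0 ≤ gauge K x := gauge_nonneg x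
    have hgp : (gauge K x ^ p) ^ (2 / p) = gauge K x ^ 2 := by
      rw [← Real.rpow_mul hg0, mul_div_cancel₀ _ (ne_of_gt hp0), Real.rpow_two]
    rw [hgp] at H
    calc ‖x‖ ^ 2 = ∑ i, c i * ⟪u i, x⟫ ^ 2 := (hiso x).symm
      _ = ∑ i, c i * ⟪x, u i⟫ ^ 2 := Finset.sum_congr rfl fun i _ => by rw [real_inner_comm]
      _ ≤ _ := H
  refine ⟨main, fun x hx => ?_⟩
  have hgx : gauge K x ≤ 1 := gauge_le_one_of_mem hx
  have hg0 : 0 ≤ gauge K x := gauge_nonneg x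
  have h1 : ‖x‖ ^ 2 ≤ (n : ℝ) ^ (1 - 2 / p) := by
    calc ‖x‖ ^ 2 ≤ (n : ℝ) ^ (1 - 2 / p) * gauge K x ^ 2 := main x
      _ ≤ (n : ℝ) ^ (1 - 2 / p) * 1 := by
          have : gauge K x ^ 2 ≤ 1 := by nlinarith
          exact mul_le_mul_of_nonneg_left this (Real.rpow_nonneg (Nat.cast_nonneg n) _)
      _ = _ := mul_one _
  have : ‖x‖ ≤ (n : ℝ) ^ ((1 : ℝ) / 2 - 1 / p) := by
    have h2 : (n : ℝ) ^ ((1 : ℝ) / 2 - 1 / p) = ((n : ℝ) ^ (1 - 2 / p)) ^ ((1 : ℝ) / 2) := by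
      rw [← Real.rpow_mul (Nat.cast_nonneg n)]
      ring_nf
    rw [h2]
    have := Real.rpow_le_rpow (sq_nonneg ‖x‖) h1 (by norm_num : (0:ℝ) ≤ 1/2)
    rw [← Real.rpow_natCast ‖x‖ 2, ← Real.rpow_mul (norm_nonneg x)] at this
    norm_num at this
    exact this
  simpa [Metric.mem_closedBall, dist_zero_right] using this
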